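/- arXiv:2406.14577 — 2 statements merged into one kernel-verified Lean document; each statement's English description precedes it below -/
import Mathlib

section
/- Let 0→h→ĝ→g→0 be a non-abelian extension with section s and non-abelian 3-cocycle (ω,θ,ρ). A pair (α,β)∈Aut(g)×Aut(h) is inducible if and only if the non-abelian 3-cocycles (ω,θ,ρ) and (ω_{(α,β)},θ_{(α,β)},ρ_{(α,β)}) are equivalent. -/
universe u v w

/-- A Lie triple system over a field `k`. -/
structure LTS (k : Type u) (V : Type v) [Field k] [AddCommGroup V] [Module k V] where
  t : V →ₗ[k] V →ₗ[k] V →ₗ[k] V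
  alt : ∀ x y, t x x y = 0
  cyc : ∀ x y z, t x y z + t y z x + t z x y = 0
  leib : ∀ a b x y z, t a b (t x y z) =
    t (t a b x) y z + t x (t a b y) z + t x y (t a b z)

/-- `D_θ(x,y) a = θ(y,x) a - θ(x,y) a`. -/
def Dmap {G H : Type*} [AddCommGroup H] (θ : G → G → H → H) (x y : G) (a : H) : H :=
  θ y x a - θ x y a

/-- `D_ρ(x)(a,b) = ρ(x)(b,a) - ρ(x)(a,b)`. -/
def Drho {G H : Type*} [AddCommGroup H] (ρ : G → H → H → H) (x : G) (a b : H) : H :=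
  ρ x b a - ρ x a b

/-- A non-abelian 3-cocycle on `g` with values in `h`: identities (3.2)–(3.14) of the paper,
together with the wedge conditions on `ω`, `θ`, `ρ`. -/
def IsNACocycle {G H : Type*} [AddCommGroup H]
    (tg : G → G → G → G) (th : H → H → H → H)
    (ω : G → G → G → H) (θ : G → G → H → H) (ρ : G → H → H → H) : Prop :=
  (∀ x y, ω x x y = 0) ∧
  (∀ x a, θ x x a = 0) ∧
  (∀ x a, ρ x a a = 0) ∧
  (∀ x y z, ω x y z + ω y z x + ω z x y = 0) ∧
  (∀ x1 x2 y1 y2 y3,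
    Dmap θ x1 x2 (ω y1 y2 y3) + ω x1 x2 (tg y1 y2 y3) =
      ω (tg x1 x2 y1) y2 y3 + θ y2 y3 (ω x1 x2 y1)
      + ω y1 (tg x1 x2 y2) y3 - θ y1 y3 (ω x1 x2 y2)
      + ω y1 y2 (tg x1 x2 y3) + Dmap θ y1 y2 (ω x1 x2 y3)) ∧
  (∀ x y z w a,
    Dmap θ x y (θ z w a) - θ z w (Dmap θ x y a) =
      θ (tg x y z) w a + θ z (tg x y w) a
      - Drho ρ w (ω x y z) a - ρ z a (ω x y w)) ∧
  (∀ x y z w a,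
    θ x (tg y z w) a - ρ x a (ω y z w) =
      θ z w (θ x y a) - θ y w (θ x z a) + Dmap θ y z (θ x w a)) ∧
  (∀ x y z a b,
    Dmap θ x y (ρ z a b) =
      ρ z (Dmap θ x y a) b + ρ (tg x y z) a b + th (ω x y z) a b
      + ρ z a (Dmap θ x y b)) ∧
  (∀ x y z a b,
    Dmap θ y z (ρ x a b) =
      ρ x a (Dmap θ y z b) - ρ z (θ x y a) b + ρ y (θ x z a) b) ∧
  (∀ x y z a b,
    θ y z (ρ x a b) =
      ρ x a (θ y z b) - Drho ρ z (θ x y a) b - ρ y b (θ x z a)) ∧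
  (∀ x y a b c,
    Dmap θ x y (th a b c) =
      th (Dmap θ x y a) b c + th a (Dmap θ x y b) c + th a b (Dmap θ x y c)) ∧
  (∀ x y a b c,
    ρ x a (ρ y b c) =
      ρ y (ρ x a b) c + ρ y b (ρ x a c) - th (θ x y a) b c) ∧
  (∀ x y a b c,
    th a b (θ x y c) =
      θ x y (th a b c) - Drho ρ y (Drho ρ x a b) c - ρ x c (Drho ρ y a b)) ∧
  (∀ x a b c d,
    th a b (ρ x c d) =
      ρ x (th a b c) d - th c (Drho ρ x a b) d + ρ x c (th a b d)) ∧
  (∀ x a b c d,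
    ρ x a (th b c d) =
      th (ρ x a b) c d + th b (ρ x a c) d + th b c (ρ x a d))

/-- The bracket `[x+a, y+b, z+c]_{(ω,θ,ρ)}` on `g ⊕ h`. -/
def nabBr {G H : Type*} [AddCommGroup H]
    (tg : G → G → G → G) (th : H → H → H → H)
    (ω : G → G → G → H) (θ : G → G → H → H) (ρ : G → H → H → H) :
    G × H → G × H → G × H → G × H :=
  fun p q r =>
    (tg p.1 q.1 r.1,
      ω p.1 q.1 r.1 + Dmap θ p.1 q.1 r.2 + θ q.1 r.1 p.2 - θ p.1 r.1 q.2
        + Drho ρ r.1 p.2 q.2 + ρ p.1 q.2 r.2 - ρ q.1 p.2 r.2 + th p.2 q.2 r.2)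

/-- Equivalence of two non-abelian 3-cocycles via `φ : g → h`
(equations (3.15)–(3.17) of the paper). -/
def CocycleEquiv {G H : Type*} [AddCommGroup H]
    (tg : G → G → G → G) (th : H → H → H → H)
    (ω1 : G → G → G → H) (θ1 : G → G → H → H) (ρ1 : G → H → H → H)
    (ω2 : G → G → G → H) (θ2 : G → G → H → H) (ρ2 : G → H → H → H)
    (φ : G → H) : Prop :=
  (∀ x y z,
    ω1 x y z - ω2 x y z =
      θ2 x z (φ y) - Dmap θ2 x y (φ z) + ρ2 x (φ y) (φ z) - θ2 y z (φ x)
        + Drho ρ2 z (φ x) (φ y) - ρ2 y (φ x) (φ z)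
        - th (φ x) (φ y) (φ z) + φ (tg x y z)) ∧
  (∀ x y a,
    θ1 x y a - θ2 x y a =
      ρ2 x a (φ y) - Drho ρ2 y a (φ x) + th a (φ x) (φ y)) ∧
  (∀ x a b, ρ1 x a b - ρ2 x a b = th a (φ x) b)

/-- The operation `i_f(g)` on degree-one cochains (from equations (4.2)–(4.4)). -/
def ibrack {M : Type*} [AddCommGroup M] (f g : M → M → M → M) :
    M → M → M → M → M → M :=
  fun x1 y1 x2 y2 z =>
    f (g x1 y1 x2) y2 z + f x2 (g x1 y1 y2) z
      - (f x1 y1 (g x2 y2 z) - f x2 y2 (g x1 y1 z))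

/-- The graded bracket `[f,g]_{Lts} = (-1)^{1·1} i_f(g) - i_g(f)` of two degree-one cochains. -/
def brLts {M : Type*} [AddCommGroup M] (f g : M → M → M → M) :
    M → M → M → M → M → M :=
  fun x1 y1 x2 y2 z =>
    -(ibrack f g x1 y1 x2 y2 z) - ibrack g f x1 y1 x2 y2 z

/-- Non-abelian 1-cocycles on `g` with values in `h`. -/
def IsZ1 {G H : Type*} [AddCommGroup H]
    (tg : G → G → G → G) (th : H → H → H → H)
    (θ : G → G → H → H) (ρ : G → H → H → H) (φ : G → H) : Prop :=
  (∀ x a b, th a (φ x) b = 0) ∧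
  (∀ x y a, th a (φ x) (φ y) - Drho ρ y a (φ x) + ρ x a (φ y) = 0) ∧
  (∀ x y z,
    Drho ρ z (φ x) (φ y) - ρ y (φ x) (φ z) - θ y z (φ x)
      + ρ x (φ y) (φ z) + θ x z (φ y) - Dmap θ x y (φ z)
      = th (φ x) (φ y) (φ z) - φ (tg x y z))

/-!
Through the section, `E = s g ⊕ i h`, so a linear `γ : E → E` with `γ ∘ i = i ∘ β` and
`p ∘ γ ∘ s = α` amounts to a linear `φ : g → h` with `γ (s (α⁻¹ x)) = s x - i (φ x)`.
Because the bracket of `E` is skew in its first two slots and satisfies the cyclic identity,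
`γ` preserves it as soon as it does so on triples of type `(s, s, s)`, `(i, s, s)`, `(s, i, i)`
and `(i, i, i)`. Written out with the definitions of `ω`, `θ`, `ρ`, these four conditions are
exactly (3.15), (3.16), (3.17), and the fact that `β` is a homomorphism.
-/

namespace LTS

variable {k E F : Type*} [Field k] [AddCommGroup E] [Module k E] [AddCommGroup F] [Module k F]

theorem t_swap (L : LTS k E) (x y z : E) : L.t x y z = -L.t y x z := by
  have h := L.alt (x + y) z
  simp only [map_add, LinearMap.add_apply, L.alt, zero_add, add_zero] at h
  exact eq_neg_of_add_eq_zero_right h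

theorem t_eq_sub (L : LTS k E) (x y z : E) : L.t x y z = L.t x z y - L.t y z x := by
  have h := L.cyc x y z
  rw [t_swap L z x y] at h
  rw [← sub_eq_zero, ← h]
  abel

/-- The four bracket types not assumed follow from skew-symmetry in the first two slots
and `t_eq_sub`. -/
theorem map_t_of_sup_eq_top (L : LTS k E) (L' : LTS k F) (f : E →ₗ[k] F)
    {A B : Submodule k E} (hAB : A ⊔ B = ⊤)
    (hAAA : ∀ a ∈ A, ∀ b ∈ A, ∀ c ∈ A, f (L.t a b c) = L'.t (f a) (f b) (f c))
    (hBAA : ∀ a ∈ B, ∀ b ∈ A, ∀ c ∈ A, f (L.t a b c) = L'.t (f a) (f b) (f c))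
    (hABB : ∀ a ∈ A, ∀ b ∈ B, ∀ c ∈ B, f (L.t a b c) = L'.t (f a) (f b) (f c))
    (hBBB : ∀ a ∈ B, ∀ b ∈ B, ∀ c ∈ B, f (L.t a b c) = L'.t (f a) (f b) (f c))
    (x y z : E) : f (L.t x y z) = L'.t (f x) (f y) (f z) := by
  have swap : ∀ u v w, f (L.t u v w) = L'.t (f u) (f v) (f w) →
      f (L.t v u w) = L'.t (f v) (f u) (f w) := by
    intro u v w h
    rw [t_swap L, map_neg, h, ← t_swap L']
  have rot : ∀ u v w, f (L.t u w v) = L'.t (f u) (f w) (f v) →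
      f (L.t v w u) = L'.t (f v) (f w) (f u) → f (L.t u v w) = L'.t (f u) (f v) (f w) := by
    intro u v w h₁ h₂
    rw [t_eq_sub L, map_sub, h₁, h₂, ← t_eq_sub L']
  have hABA : ∀ a ∈ A, ∀ b ∈ B, ∀ c ∈ A, f (L.t a b c) = L'.t (f a) (f b) (f c) :=
    fun a ha b hb c hc => swap _ _ _ (hBAA b hb a ha c hc)
  have hAAB : ∀ a ∈ A, ∀ b ∈ A, ∀ c ∈ B, f (L.t a b c) = L'.t (f a) (f b) (f c) :=
    fun a ha b hb c hc => rot _ _ _ (hABA a ha c hc b hb) (hABA b hb c hc a ha)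
  have hBAB : ∀ a ∈ B, ∀ b ∈ A, ∀ c ∈ B, f (L.t a b c) = L'.t (f a) (f b) (f c) :=
    fun a ha b hb c hc => swap _ _ _ (hABB b hb a ha c hc)
  have hBBA : ∀ a ∈ B, ∀ b ∈ B, ∀ c ∈ A, f (L.t a b c) = L'.t (f a) (f b) (f c) :=
    fun a ha b hb c hc => rot _ _ _ (hBAB a ha c hc b hb) (hBAB b hb c hc a ha)
  have decomp : ∀ e : E, ∃ a ∈ A, ∃ b ∈ B, a + b = e := fun e =>
    Submodule.mem_sup.mp (hAB ▸ Submodule.mem_top)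
  obtain ⟨x₁, hx₁, x₂, hx₂, rfl⟩ := decomp x
  obtain ⟨y₁, hy₁, y₂, hy₂, rfl⟩ := decomp y
  obtain ⟨z₁, hz₁, z₂, hz₂, rfl⟩ := decomp z
  simp only [map_add, LinearMap.add_apply]
  rw [hAAA _ hx₁ _ hy₁ _ hz₁, hAAB _ hx₁ _ hy₁ _ hz₂, hABA _ hx₁ _ hy₂ _ hz₁,
    hABB _ hx₁ _ hy₂ _ hz₂, hBAA _ hx₂ _ hy₁ _ hz₁, hBAB _ hx₂ _ hy₁ _ hz₂,
    hBBA _ hx₂ _ hy₂ _ hz₁, hBBB _ hx₂ _ hy₂ _ hz₂]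

end LTS

section Extension

open LTS

variable {k G H E : Type*} [Field k] [AddCommGroup G] [Module k G]
  [AddCommGroup H] [Module k H] [AddCommGroup E] [Module k E]
  {Lg : LTS k G} {Lh : LTS k H} {LE : LTS k E} {i : H →ₗ[k] E} {s : G →ₗ[k] E}
  {ω : G → G → G → H} {θ : G → G → H → H} {ρ : G → H → H → H}

theorem t_sss (hω : ∀ x y z, i (ω x y z) = LE.t (s x) (s y) (s z) - s (Lg.t x y z))
    (x y z : G) : LE.t (s x) (s y) (s z) = s (Lg.t x y z) + i (ω x y z) := by
  rw [hω]
  abel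

theorem t_ssi (hθ : ∀ x y a, i (θ x y a) = LE.t (i a) (s x) (s y)) (x y : G) (c : H) :
    LE.t (s x) (s y) (i c) = i (Dmap θ x y c) := by
  rw [Dmap, map_sub, hθ, hθ, t_eq_sub LE (s x), t_swap LE (s y), t_swap LE (s x)]
  abel

theorem t_sis (hθ : ∀ x y a, i (θ x y a) = LE.t (i a) (s x) (s y)) (x : G) (b : H) (z : G) :
    LE.t (s x) (i b) (s z) = -i (θ x z b) := by
  rw [t_swap LE, hθ]

theorem t_isi (hρ : ∀ x a b, i (ρ x a b) = LE.t (s x) (i a) (i b)) (a : H) (y : G) (c : H) :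
    LE.t (i a) (s y) (i c) = -i (ρ y a c) := by
  rw [t_swap LE, hρ]

theorem t_iis (hρ : ∀ x a b, i (ρ x a b) = LE.t (s x) (i a) (i b)) (a b : H) (z : G) :
    LE.t (i a) (i b) (s z) = i (Drho ρ z a b) := by
  rw [Drho, map_sub, hρ, hρ, t_eq_sub LE (i a), t_swap LE (i b), t_swap LE (i a)]
  abel

variable (Lg Lh LE i s ω θ ρ) in
structure IsSectionCocycle : Prop where
  map_t_incl : ∀ a b c, i (Lh.t a b c) = LE.t (i a) (i b) (i c)
  incl_injective : Function.Injective i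
  incl_ω : ∀ x y z, i (ω x y z) = LE.t (s x) (s y) (s z) - s (Lg.t x y z)
  incl_θ : ∀ x y a, i (θ x y a) = LE.t (i a) (s x) (s y)
  incl_ρ : ∀ x a b, i (ρ x a b) = LE.t (s x) (i a) (i b)

variable {α : G ≃ₗ[k] G} {β : H ≃ₗ[k] H} {φ : G → H} {γ : E →ₗ[k] E}

theorem map_t_sss_iff (hc : IsSectionCocycle Lg Lh LE i s ω θ ρ)
    (αhom : ∀ x y z, α (Lg.t x y z) = Lg.t (α x) (α y) (α z))
    (hγi : ∀ a, γ (i a) = i (β a)) (hγs : ∀ x, γ (s (α.symm x)) = s x - i (φ x)) (x y z : G) :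
    γ (LE.t (s (α.symm x)) (s (α.symm y)) (s (α.symm z))) =
        LE.t (γ (s (α.symm x))) (γ (s (α.symm y))) (γ (s (α.symm z))) ↔
      β (ω (α.symm x) (α.symm y) (α.symm z)) - ω x y z =
        θ x z (φ y) - Dmap θ x y (φ z) + ρ x (φ y) (φ z) - θ y z (φ x)
          + Drho ρ z (φ x) (φ y) - ρ y (φ x) (φ z) - Lh.t (φ x) (φ y) (φ z)
          + φ (Lg.t x y z) := by
  have hα : Lg.t (α.symm x) (α.symm y) (α.symm z) = α.symm (Lg.t x y z) := by
    rw [LinearEquiv.eq_symm_apply, αhom, α.apply_symm_apply, α.apply_symm_apply,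
      α.apply_symm_apply]
  have defect : γ (LE.t (s (α.symm x)) (s (α.symm y)) (s (α.symm z))) -
      LE.t (γ (s (α.symm x))) (γ (s (α.symm y))) (γ (s (α.symm z))) =
      i (β (ω (α.symm x) (α.symm y) (α.symm z)) - ω x y z -
        (θ x z (φ y) - Dmap θ x y (φ z) + ρ x (φ y) (φ z) - θ y z (φ x)
          + Drho ρ z (φ x) (φ y) - ρ y (φ x) (φ z) - Lh.t (φ x) (φ y) (φ z)
          + φ (Lg.t x y z))) := by
    rw [t_sss hc.incl_ω, hα, map_add, hγs, hγi, hγs, hγs, hγs]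
    simp only [map_sub, map_add, LinearMap.sub_apply, t_sss hc.incl_ω, t_ssi hc.incl_θ,
      t_sis hc.incl_θ, t_isi hc.incl_ρ, t_iis hc.incl_ρ, ← hc.incl_θ, ← hc.incl_ρ,
      ← hc.map_t_incl]
    abel
  rw [← sub_eq_zero, defect, map_eq_zero_iff i hc.incl_injective, sub_eq_zero]

theorem map_t_iss_iff (hc : IsSectionCocycle Lg Lh LE i s ω θ ρ)
    (hγi : ∀ a, γ (i a) = i (β a)) (hγs : ∀ x, γ (s (α.symm x)) = s x - i (φ x))
    (x y : G) (a : H) :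
    γ (LE.t (i (β.symm a)) (s (α.symm x)) (s (α.symm y))) =
        LE.t (γ (i (β.symm a))) (γ (s (α.symm x))) (γ (s (α.symm y))) ↔
      β (θ (α.symm x) (α.symm y) (β.symm a)) - θ x y a =
        ρ x a (φ y) - Drho ρ y a (φ x) + Lh.t a (φ x) (φ y) := by
  have defect : γ (LE.t (i (β.symm a)) (s (α.symm x)) (s (α.symm y))) -
      LE.t (γ (i (β.symm a))) (γ (s (α.symm x))) (γ (s (α.symm y))) =
      i (β (θ (α.symm x) (α.symm y) (β.symm a)) - θ x y a -
        (ρ x a (φ y) - Drho ρ y a (φ x) + Lh.t a (φ x) (φ y))) := by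
    rw [← hc.incl_θ, hγi, hγi, β.apply_symm_apply, hγs, hγs]
    simp only [map_sub, map_add, LinearMap.sub_apply, t_isi hc.incl_ρ, t_iis hc.incl_ρ,
      ← hc.incl_θ, ← hc.map_t_incl]
    abel
  rw [← sub_eq_zero, defect, map_eq_zero_iff i hc.incl_injective, sub_eq_zero]

theorem map_t_sii_iff (hc : IsSectionCocycle Lg Lh LE i s ω θ ρ)
    (hγi : ∀ a, γ (i a) = i (β a)) (hγs : ∀ x, γ (s (α.symm x)) = s x - i (φ x))
    (x : G) (a b : H) :
    γ (LE.t (s (α.symm x)) (i (β.symm a)) (i (β.symm b))) =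
        LE.t (γ (s (α.symm x))) (γ (i (β.symm a))) (γ (i (β.symm b))) ↔
      β (ρ (α.symm x) (β.symm a) (β.symm b)) - ρ x a b = Lh.t a (φ x) b := by
  have defect : γ (LE.t (s (α.symm x)) (i (β.symm a)) (i (β.symm b))) -
      LE.t (γ (s (α.symm x))) (γ (i (β.symm a))) (γ (i (β.symm b))) =
      i (β (ρ (α.symm x) (β.symm a) (β.symm b)) - ρ x a b - Lh.t a (φ x) b) := by
    rw [← hc.incl_ρ, hγi, hγi, hγi, β.apply_symm_apply, β.apply_symm_apply, hγs,
      t_swap Lh a]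
    simp only [map_sub, map_neg, LinearMap.sub_apply, ← hc.incl_ρ, ← hc.map_t_incl]
    abel
  rw [← sub_eq_zero, defect, map_eq_zero_iff i hc.incl_injective, sub_eq_zero]

theorem map_t_iff_cocycleEquiv (hc : IsSectionCocycle Lg Lh LE i s ω θ ρ)
    (hspan : LinearMap.range s ⊔ LinearMap.range i = ⊤)
    (αhom : ∀ x y z, α (Lg.t x y z) = Lg.t (α x) (α y) (α z))
    (βhom : ∀ a b c, β (Lh.t a b c) = Lh.t (β a) (β b) (β c))
    (hγi : ∀ a, γ (i a) = i (β a)) (hγs : ∀ x, γ (s (α.symm x)) = s x - i (φ x)) :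
    (∀ e₁ e₂ e₃, γ (LE.t e₁ e₂ e₃) = LE.t (γ e₁) (γ e₂) (γ e₃)) ↔
      CocycleEquiv (fun x y z => Lg.t x y z) (fun a b c => Lh.t a b c)
        (fun x y z => β (ω (α.symm x) (α.symm y) (α.symm z)))
        (fun x y a => β (θ (α.symm x) (α.symm y) (β.symm a)))
        (fun x a b => β (ρ (α.symm x) (β.symm a) (β.symm b))) ω θ ρ φ := by
  constructor
  · intro h
    exact ⟨fun x y z => (map_t_sss_iff hc αhom hγi hγs x y z).mp (h _ _ _),
      fun x y a => (map_t_iss_iff hc hγi hγs x y a).mp (h _ _ _),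
      fun x a b => (map_t_sii_iff hc hγi hγs x a b).mp (h _ _ _)⟩
  · rintro ⟨h₁, h₂, h₃⟩
    refine LTS.map_t_of_sup_eq_top LE LE γ hspan ?_ ?_ ?_ ?_
    · rintro _ ⟨x, rfl⟩ _ ⟨y, rfl⟩ _ ⟨z, rfl⟩
      simpa only [α.symm_apply_apply] using
        (map_t_sss_iff hc αhom hγi hγs (α x) (α y) (α z)).mpr (h₁ _ _ _)
    · rintro _ ⟨a, rfl⟩ _ ⟨x, rfl⟩ _ ⟨y, rfl⟩
      simpa only [α.symm_apply_apply, β.symm_apply_apply] using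
        (map_t_iss_iff hc hγi hγs (α x) (α y) (β a)).mpr (h₂ _ _ _)
    · rintro _ ⟨x, rfl⟩ _ ⟨a, rfl⟩ _ ⟨b, rfl⟩
      simpa only [α.symm_apply_apply, β.symm_apply_apply] using
        (map_t_sii_iff hc hγi hγs (α x) (β a) (β b)).mpr (h₃ _ _ _)
    · rintro _ ⟨a, rfl⟩ _ ⟨b, rfl⟩ _ ⟨c, rfl⟩
      rw [← hc.map_t_incl, hγi, hγi, hγi, hγi, βhom, hc.map_t_incl]

end Extension

section Splitting

variable {k G H E : Type*} [Field k] [AddCommGroup G] [Module k G]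
  [AddCommGroup H] [Module k H] [AddCommGroup E] [Module k E]
  {i : H →ₗ[k] E} {p : E →ₗ[k] G} {s : G →ₗ[k] E}

noncomputable def sectionSplitting (hexact : LinearMap.range i = LinearMap.ker p)
    (iinj : Function.Injective i) (hs : ∀ x, p (s x) = x) : (G × H) ≃ₗ[k] E :=
  (LinearEquiv.prodComm k G H).trans
    ((LinearMap.exact_iff.mpr hexact.symm).splitSurjectiveEquiv iinj
      ⟨s, LinearMap.ext hs⟩).1.symm

theorem sectionSplitting_apply (hexact : LinearMap.range i = LinearMap.ker p)
    (iinj : Function.Injective i) (hs : ∀ x, p (s x) = x) (x : G) (a : H) :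
    sectionSplitting hexact iinj hs (x, a) = i a + s x :=
  rfl

theorem incl_add_section_eq (hexact : LinearMap.range i = LinearMap.ker p)
    (iinj : Function.Injective i) (hs : ∀ x, p (s x) = x) (e : E) :
    i ((sectionSplitting hexact iinj hs).symm e).2 + s (p e) = e := by
  obtain ⟨⟨x, a⟩, rfl⟩ := (sectionSplitting hexact iinj hs).surjective e
  have hpi : p (i a) = 0 := LinearMap.mem_ker.mp (hexact ▸ LinearMap.mem_range_self i a)
  rw [LinearEquiv.symm_apply_apply, sectionSplitting_apply, map_add, hpi, hs, zero_add]

theorem range_section_sup_range_incl (hexact : LinearMap.range i = LinearMap.ker p)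
    (iinj : Function.Injective i) (hs : ∀ x, p (s x) = x) :
    LinearMap.range s ⊔ LinearMap.range i = ⊤ := by
  refine Submodule.eq_top_iff'.mpr fun e => ?_
  rw [← incl_add_section_eq hexact iinj hs e, add_comm]
  exact Submodule.add_mem_sup (LinearMap.mem_range_self s _) (LinearMap.mem_range_self i _)

theorem exists_eq_section_sub_incl (hexact : LinearMap.range i = LinearMap.ker p)
    (iinj : Function.Injective i) (hs : ∀ x, p (s x) = x) (f : G →ₗ[k] E)
    (hf : ∀ x, p (f x) = x) : ∃ φ : G →ₗ[k] H, ∀ x, f x = s x - i (φ x) := by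
  refine ⟨-(LinearMap.snd k G H ∘ₗ (sectionSplitting hexact iinj hs).symm.toLinearMap ∘ₗ f),
    fun x => ?_⟩
  conv_lhs => rw [← incl_add_section_eq hexact iinj hs (f x), hf]
  simp only [LinearMap.neg_apply, LinearMap.comp_apply, LinearMap.snd_apply,
    LinearEquiv.coe_coe, map_neg, sub_neg_eq_add, add_comm]

theorem exists_linearEquiv_map_incl_map_section (hexact : LinearMap.range i = LinearMap.ker p)
    (iinj : Function.Injective i) (hs : ∀ x, p (s x) = x) (α : G ≃ₗ[k] G) (β : H ≃ₗ[k] H)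
    (φ : G →ₗ[k] H) :
    ∃ γ : E ≃ₗ[k] E, (∀ a, γ (i a) = i (β a)) ∧ (∀ x, γ (s (α.symm x)) = s x - i (φ x)) ∧
      ∀ x, p (γ (s x)) = α x := by
  set Φ := sectionSplitting hexact iinj hs
  have hΦi : ∀ a, Φ.symm (i a) = (0, a) := fun a => by
    rw [LinearEquiv.symm_apply_eq, sectionSplitting_apply, map_zero, add_zero]
  have hΦs : ∀ x, Φ.symm (s x) = (x, 0) := fun x => by
    rw [LinearEquiv.symm_apply_eq, sectionSplitting_apply, map_zero, zero_add]
  have hpi : ∀ a, p (i a) = 0 := fun a =>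
    LinearMap.mem_ker.mp (hexact ▸ LinearMap.mem_range_self i a)
  refine ⟨Φ.symm ≪≫ₗ α.skewProd β (-(φ ∘ₗ α.toLinearMap)) ≪≫ₗ Φ, fun a => ?_, fun x => ?_,
    fun x => ?_⟩ <;>
  simp [hΦi, hΦs, Φ, sectionSplitting_apply, LinearEquiv.skewProd_apply, hpi, hs, sub_eq_add_neg,
    add_comm]

end Splitting

theorem statement16_general {k G H E : Type*} [Field k] [AddCommGroup G] [Module k G]
    [AddCommGroup H] [Module k H] [AddCommGroup E] [Module k E]
    (Lg : LTS k G) (Lh : LTS k H) (LE : LTS k E)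
    (i : H →ₗ[k] E) (p : E →ₗ[k] G)
    (ihom : ∀ a b c, i (Lh.t a b c) = LE.t (i a) (i b) (i c))
    (iinj : Function.Injective i)
    (hexact : LinearMap.range i = LinearMap.ker p)
    (s : G →ₗ[k] E) (hs : ∀ x, p (s x) = x)
    (ω : G → G → G → H) (θ : G → G → H → H) (ρ : G → H → H → H)
    (hω : ∀ x y z, i (ω x y z) = LE.t (s x) (s y) (s z) - s (Lg.t x y z))
    (hθ : ∀ x y a, i (θ x y a) = LE.t (i a) (s x) (s y))
    (hρ : ∀ x a b, i (ρ x a b) = LE.t (s x) (i a) (i b))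
    (α : G ≃ₗ[k] G) (β : H ≃ₗ[k] H)
    (αhom : ∀ x y z, α (Lg.t x y z) = Lg.t (α x) (α y) (α z))
    (βhom : ∀ a b c, β (Lh.t a b c) = Lh.t (β a) (β b) (β c)) :
    (∃ γ : E ≃ₗ[k] E,
      (∀ x y z, γ (LE.t x y z) = LE.t (γ x) (γ y) (γ z)) ∧
      (∀ a, γ (i a) = i (β a)) ∧
      (∀ x, p (γ (s x)) = α x)) ↔
    (∃ φ : G →ₗ[k] H,
      CocycleEquiv (fun x y z => Lg.t x y z) (fun a b c => Lh.t a b c)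
        (fun x y z => β (ω (α.symm x) (α.symm y) (α.symm z)))
        (fun x y a => β (θ (α.symm x) (α.symm y) (β.symm a)))
        (fun x a b => β (ρ (α.symm x) (β.symm a) (β.symm b)))
        ω θ ρ (fun x => φ x)) := by
  have hc : IsSectionCocycle Lg Lh LE i s ω θ ρ := ⟨ihom, iinj, hω, hθ, hρ⟩
  have hspan := range_section_sup_range_incl hexact iinj hs
  constructor
  · rintro ⟨γ, γhom, γi, γs⟩
    obtain ⟨φ, hφ⟩ := exists_eq_section_sub_incl hexact iinj hs
      (γ.toLinearMap ∘ₗ s ∘ₗ α.symm.toLinearMap) fun x => by simp [γs]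
    exact ⟨φ, (map_t_iff_cocycleEquiv hc hspan αhom βhom (γ := γ.toLinearMap) γi hφ).mp γhom⟩
  · rintro ⟨φ, hφ⟩
    obtain ⟨γ, γi, γs, γp⟩ := exists_linearEquiv_map_incl_map_section hexact iinj hs α β φ
    exact ⟨γ, (map_t_iff_cocycleEquiv hc hspan αhom βhom (γ := γ.toLinearMap) γi γs).mpr hφ,
      γi, γp⟩

/-- a pair `(α,β) ∈ Aut(g) × Aut(h)` is inducible if and only if the
non-abelian 3-cocycles `(ω_{(α,β)}, θ_{(α,β)}, ρ_{(α,β)})` and `(ω,θ,ρ)` are equivalent. -/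
theorem statement16 {k G H E : Type*} [Field k] [AddCommGroup G] [Module k G]
    [AddCommGroup H] [Module k H] [AddCommGroup E] [Module k E]
    (Lg : LTS k G) (Lh : LTS k H) (LE : LTS k E)
    (i : H →ₗ[k] E) (p : E →ₗ[k] G)
    (ihom : ∀ a b c, i (Lh.t a b c) = LE.t (i a) (i b) (i c))
    (phom : ∀ x y z, p (LE.t x y z) = Lg.t (p x) (p y) (p z))
    (iinj : Function.Injective i) (psurj : Function.Surjective p)
    (hexact : LinearMap.range i = LinearMap.ker p)
    (s : G →ₗ[k] E) (hs : ∀ x, p (s x) = x)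
    (ω : G → G → G → H) (θ : G → G → H → H) (ρ : G → H → H → H)
    (hω : ∀ x y z, i (ω x y z) = LE.t (s x) (s y) (s z) - s (Lg.t x y z))
    (hθ : ∀ x y a, i (θ x y a) = LE.t (i a) (s x) (s y))
    (hρ : ∀ x a b, i (ρ x a b) = LE.t (s x) (i a) (i b))
    (α : G ≃ₗ[k] G) (β : H ≃ₗ[k] H)
    (αhom : ∀ x y z, α (Lg.t x y z) = Lg.t (α x) (α y) (α z))
    (βhom : ∀ a b c, β (Lh.t a b c) = Lh.t (β a) (β b) (β c)) :
    (∃ γ : E ≃ₗ[k] E,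
      (∀ x y z, γ (LE.t x y z) = LE.t (γ x) (γ y) (γ z)) ∧
      (∀ a, γ (i a) = i (β a)) ∧
      (∀ x, p (γ (s x)) = α x)) ↔
    (∃ φ : G →ₗ[k] H,
      CocycleEquiv (fun x y z => Lg.t x y z) (fun a b c => Lh.t a b c)
        (fun x y z => β (ω (α.symm x) (α.symm y) (α.symm z)))
        (fun x y a => β (θ (α.symm x) (α.symm y) (β.symm a)))
        (fun x a b => β (ρ (α.symm x) (β.symm a) (β.symm b)))
        ω θ ρ (fun x => φ x)) :=
  statement16_general Lg Lh LE i p ihom iinj hexact s hs ω θ ρ hω hθ hρ α β αhom βhom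
end

section
/- For a non-abelian extension 0→h→ĝ→g→0 of Lie triple systems, there is an exact sequence of groups and pointed sets: 1 → Aut_h^g(ĝ) → Aut_h(ĝ) →^λ Aut(g)×Aut(h) →^W H³_nab(g,h), where Aut_h^g(ĝ) = ker λ and W(α,β)=[(ω_{(α,β)},θ_{(α,β)},ρ_{(α,β)}) − (ω,θ,ρ)] is the Wells map; in particular ker W = Im λ. -/
universe u v w

/-- The equivalence relation on triples `(ω,θ,ρ)` (raw cochain data) whose quotient is the
non-abelian cohomology `H³_nab(g,h)`. -/
def relH3 {k G H : Type*} [Field k] [AddCommGroup G] [Module k G]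
    [AddCommGroup H] [Module k H] (Lg : LTS k G) (Lh : LTS k H)
    (c1 c2 : (G → G → G → H) × (G → G → H → H) × (G → H → H → H)) : Prop :=
  ∃ φ : G →ₗ[k] H,
    CocycleEquiv (fun x y z => Lg.t x y z) (fun a b c => Lh.t a b c)
      c1.1 c1.2.1 c1.2.2 c2.1 c2.2.1 c2.2.2 (fun x => φ x)

/-!
Through a section `s`, the map `(x, a) ↦ s x + i a` identifies `g × h` with `ĝ`, and the bracket
of `ĝ` becomes `nabBr` built from the cocycle `(ω, θ, ρ)` of `s`. If `γ` lifts `(α, β)`, the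
twisted cocycle `(ω, θ, ρ)_{(α,β)}` is the cocycle of the section `γ ∘ s ∘ α⁻¹`, and replacing a
section `s` by `s - i ∘ φ` moves its cocycle by the gauge action of `φ`, which is precisely the
equivalence of cocycles. Conversely, if the twisted cocycle is the gauge transform of `(ω, θ, ρ)`
by `φ`, it is the cocycle of `s - i ∘ φ`, and `(s - i ∘ φ, i) ∘ (α × β) ∘ (s, i)⁻¹` is an
automorphism of `ĝ` lifting `(α, β)`.

Since `H³_nab(g, h)` is the quotient by the equivalence relation *generated* by cocycle
equivalence, one also needs that on cochains additive in their `h`-arguments the gauge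
transformations form an action of the additive group `Hom(g, h)`, so that cocycle equivalence is
already an equivalence relation there.
-/

theorem LTS.t_swap_s17 {k V : Type*} [Field k] [AddCommGroup V] [Module k V]
    (L : LTS k V) (u v w : V) : L.t u v w = -L.t v u w := by
  have h := L.alt (u + v) w
  simp only [map_add, LinearMap.add_apply, L.alt] at h
  linear_combination (norm := abel1) h

theorem Relation.EqvGen.rel_of_invariant {α : Type*} {r : α → α → Prop} {P : α → Prop}
    (hP : ∀ a b, r a b → (P a ↔ P b)) (hrefl : ∀ a, P a → r a a)
    (hsymm : ∀ a b, P b → r a b → r b a)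
    (htrans : ∀ a b c, P c → r a b → r b c → r a c)
    {a b : α} (h : Relation.EqvGen r a b) (hb : P b) : r a b := by
  suffices (P a ↔ P b) ∧ (P b → r a b) from this.2 hb
  clear hb
  induction h with
  | rel a b hab => exact ⟨hP a b hab, fun _ => hab⟩
  | refl a => exact ⟨Iff.rfl, hrefl a⟩
  | symm a b _ ih => exact ⟨ih.1.symm, fun ha => hsymm a b (ih.1.1 ha) (ih.2 (ih.1.1 ha))⟩
  | trans a b c _ _ ih₁ ih₂ =>
    exact ⟨ih₁.1.trans ih₂.1, fun hc => htrans a b c hc (ih₁.2 (ih₂.1.2 hc)) (ih₂.2 hc)⟩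

abbrev NabCochain (G H : Type*) := (G → G → G → H) × (G → G → H → H) × (G → H → H → H)

namespace NabCochain

variable {k G H : Type*} [Field k] [AddCommGroup G] [Module k G] [AddCommGroup H] [Module k H]

def IsHAdditive (c : NabCochain G H) : Prop :=
  (∀ x y a b, c.2.1 x y (a + b) = c.2.1 x y a + c.2.1 x y b) ∧
  (∀ x a b e, c.2.2 x (a + b) e = c.2.2 x a e + c.2.2 x b e) ∧
  (∀ x a b e, c.2.2 x a (b + e) = c.2.2 x a b + c.2.2 x a e)

def gauge (Lg : LTS k G) (Lh : LTS k H) (d : NabCochain G H) (φ : G → H) : NabCochain G H :=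
  (fun x y z =>
      (d.2.1 x z (φ y) - Dmap d.2.1 x y (φ z) + d.2.2 x (φ y) (φ z) - d.2.1 y z (φ x)
        + Drho d.2.2 z (φ x) (φ y) - d.2.2 y (φ x) (φ z)
        - Lh.t (φ x) (φ y) (φ z) + φ (Lg.t x y z)) + d.1 x y z,
    fun x y a =>
      (d.2.2 x a (φ y) - Drho d.2.2 y a (φ x) + Lh.t a (φ x) (φ y)) + d.2.1 x y a,
    fun x a b => Lh.t a (φ x) b + d.2.2 x a b)

variable (Lg : LTS k G) (Lh : LTS k H)

theorem relH3_iff_exists_eq_gauge (c d : NabCochain G H) :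
    relH3 Lg Lh c d ↔ ∃ φ : G →ₗ[k] H, c = d.gauge Lg Lh φ := by
  simp only [relH3, CocycleEquiv, gauge, Prod.ext_iff, funext_iff, sub_eq_iff_eq_add]

theorem gauge_zero {d : NabCochain G H} (hd : d.IsHAdditive) : d.gauge Lg Lh 0 = d := by
  obtain ⟨h1, h2, h3⟩ := hd
  have z1 : ∀ x y, d.2.1 x y 0 = 0 := fun x y => (AddMonoidHom.mk' _ (h1 x y)).map_zero
  have z2 : ∀ x e, d.2.2 x 0 e = 0 := fun x e =>
    (AddMonoidHom.mk' (d.2.2 x · e) (fun a b => h2 x a b e)).map_zero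
  have z3 : ∀ x a, d.2.2 x a 0 = 0 := fun x a => (AddMonoidHom.mk' _ (h3 x a)).map_zero
  simp [gauge, Dmap, Drho, z1, z2, z3]

theorem gauge_gauge {d : NabCochain G H} (hd : d.IsHAdditive) (φ ψ : G → H) :
    (d.gauge Lg Lh ψ).gauge Lg Lh φ = d.gauge Lg Lh (φ + ψ) := by
  obtain ⟨h1, h2, h3⟩ := hd
  refine Prod.ext (funext fun x => funext fun y => funext fun z => ?_)
    (Prod.ext (funext fun x => funext fun y => funext fun a => ?_)
      (funext fun x => funext fun a => funext fun b => ?_))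
  · simp only [gauge, Dmap, Drho, Pi.add_apply, h1, h2, h3, map_add, LinearMap.add_apply]
    linear_combination (norm := abel1)
      (Lh.t_swap_s17 (ψ z) (φ y) (φ x)) - Lh.cyc (ψ z) (φ y) (φ x)
      + (Lh.t_swap_s17 (φ y) (φ x) (ψ z)) - (Lh.t_swap_s17 (ψ x) (φ z) (φ y))
      + Lh.cyc (ψ x) (φ z) (φ y) + Lh.cyc (φ z) (ψ x) (φ y)
      - (Lh.t_swap_s17 (φ z) (φ y) (ψ x)) - (Lh.t_swap_s17 (ψ x) (ψ z) (φ y))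
      + Lh.cyc (ψ x) (ψ z) (φ y) - (Lh.t_swap_s17 (φ y) (ψ z) (ψ x))
      + Lh.cyc (φ y) (ψ z) (ψ x) + Lh.cyc (ψ x) (ψ y) (φ z)
      - (Lh.t_swap_s17 (ψ y) (φ z) (ψ x))
  · simp only [gauge, Dmap, Drho, Pi.add_apply, h1, h2, h3, map_add, LinearMap.add_apply]
    linear_combination (norm := abel1) (Lh.t_swap_s17 (ψ y) a (φ x)) - Lh.cyc (ψ y) a (φ x)
  · simp only [gauge, Pi.add_apply, map_add, LinearMap.add_apply]
    abel

theorem isHAdditive_gauge_iff (d : NabCochain G H) (φ : G → H) :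
    (d.gauge Lg Lh φ).IsHAdditive ↔ d.IsHAdditive := by
  have hρ₁ : ∀ x a b e, (d.gauge Lg Lh φ).2.2 x (a + b) e =
      (d.gauge Lg Lh φ).2.2 x a e + (d.gauge Lg Lh φ).2.2 x b e ↔
      d.2.2 x (a + b) e = d.2.2 x a e + d.2.2 x b e := by
    intro x a b e
    simp only [gauge, map_add, LinearMap.add_apply]
    constructor <;> intro h <;> linear_combination (norm := abel1) h
  have hρ₂ : ∀ x a b e, (d.gauge Lg Lh φ).2.2 x a (b + e) =
      (d.gauge Lg Lh φ).2.2 x a b + (d.gauge Lg Lh φ).2.2 x a e ↔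
      d.2.2 x a (b + e) = d.2.2 x a b + d.2.2 x a e := by
    intro x a b e
    simp only [gauge, map_add]
    constructor <;> intro h <;> linear_combination (norm := abel1) h
  have hθ : (∀ x a b e, d.2.2 x (a + b) e = d.2.2 x a e + d.2.2 x b e) →
      (∀ x a b e, d.2.2 x a (b + e) = d.2.2 x a b + d.2.2 x a e) →
      ∀ x y a b, (d.gauge Lg Lh φ).2.1 x y (a + b) =
        (d.gauge Lg Lh φ).2.1 x y a + (d.gauge Lg Lh φ).2.1 x y b ↔
        d.2.1 x y (a + b) = d.2.1 x y a + d.2.1 x y b := by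
    intro h₂ h₃ x y a b
    simp only [gauge, Drho, h₂, h₃, map_add, LinearMap.add_apply]
    constructor <;> intro h <;> linear_combination (norm := abel1) h
  simp only [IsHAdditive, hρ₁, hρ₂]
  constructor
  · rintro ⟨h₁, h₂, h₃⟩
    exact ⟨fun x y a b => (hθ h₂ h₃ x y a b).1 (h₁ x y a b), h₂, h₃⟩
  · rintro ⟨h₁, h₂, h₃⟩
    exact ⟨fun x y a b => (hθ h₂ h₃ x y a b).2 (h₁ x y a b), h₂, h₃⟩

theorem relH3_of_quot_mk_eq {c d : NabCochain G H} (hd : d.IsHAdditive)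
    (h : Quot.mk (relH3 Lg Lh) c = Quot.mk (relH3 Lg Lh) d) : relH3 Lg Lh c d := by
  refine (Quot.eqvGen_exact h).rel_of_invariant (P := IsHAdditive) ?_ ?_ ?_ ?_ hd
  · rintro a b hab
    obtain ⟨φ, rfl⟩ := (relH3_iff_exists_eq_gauge Lg Lh _ _).1 hab
    exact isHAdditive_gauge_iff Lg Lh b φ
  · intro a ha
    exact (relH3_iff_exists_eq_gauge Lg Lh _ _).2 ⟨0, (gauge_zero Lg Lh ha).symm⟩
  · rintro a b hb hab
    obtain ⟨φ, rfl⟩ := (relH3_iff_exists_eq_gauge Lg Lh _ _).1 hab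
    refine (relH3_iff_exists_eq_gauge Lg Lh _ _).2 ⟨-φ, ?_⟩
    rw [gauge_gauge Lg Lh hb, LinearMap.coe_neg, neg_add_cancel, gauge_zero Lg Lh hb]
  · rintro a b c hc hab hbc
    obtain ⟨φ, rfl⟩ := (relH3_iff_exists_eq_gauge Lg Lh _ _).1 hab
    obtain ⟨ψ, rfl⟩ := (relH3_iff_exists_eq_gauge Lg Lh _ _).1 hbc
    exact (relH3_iff_exists_eq_gauge Lg Lh _ _).2 ⟨φ + ψ, gauge_gauge Lg Lh hc φ ψ⟩

def bracket (c : NabCochain G H) : G × H → G × H → G × H → G × H :=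
  nabBr (fun x y z => Lg.t x y z) (fun a b c => Lh.t a b c) c.1 c.2.1 c.2.2

/-- The transformed cocycle `(ω_{(α,β)}, θ_{(α,β)}, ρ_{(α,β)})` of the Wells map. -/
def twist (α : G ≃ₗ[k] G) (β : H ≃ₗ[k] H) (c : NabCochain G H) : NabCochain G H :=
  (fun x y z => β (c.1 (α.symm x) (α.symm y) (α.symm z)),
    fun x y a => β (c.2.1 (α.symm x) (α.symm y) (β.symm a)),
    fun x a b => β (c.2.2 (α.symm x) (β.symm a) (β.symm b)))

theorem bracket_twist {α : G ≃ₗ[k] G} {β : H ≃ₗ[k] H}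
    (hα : ∀ x y z, α (Lg.t x y z) = Lg.t (α x) (α y) (α z))
    (hβ : ∀ a b c, β (Lh.t a b c) = Lh.t (β a) (β b) (β c)) (c : NabCochain G H)
    (u v w : G × H) :
    (c.twist α β).bracket Lg Lh (Prod.map α β u) (Prod.map α β v) (Prod.map α β w) =
      Prod.map α β (c.bracket Lg Lh u v w) := by
  simp [bracket, nabBr, twist, Dmap, Drho, hα, hβ, map_add, map_sub]

end NabCochain

section Extension

open NabCochain

variable {k G H E : Type*} [Field k] [AddCommGroup G] [Module k G] [AddCommGroup H] [Module k H]
  [AddCommGroup E] [Module k E] {Lg : LTS k G} {Lh : LTS k H} {LE : LTS k E} {i : H →ₗ[k] E}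
  {p : E →ₗ[k] G} {s : G →ₗ[k] E} {c : NabCochain G H}

variable (Lg LE i) in
def IsSectionCocycle_s17 (s : G →ₗ[k] E) (c : NabCochain G H) : Prop :=
  (∀ x y z, i (c.1 x y z) = LE.t (s x) (s y) (s z) - s (Lg.t x y z)) ∧
  (∀ x y a, i (c.2.1 x y a) = LE.t (i a) (s x) (s y)) ∧
  (∀ x a b, i (c.2.2 x a b) = LE.t (s x) (i a) (i b))

namespace IsSectionCocycle_s17

theorem unique (hi : Function.Injective i) {c' : NabCochain G H}
    (hc : IsSectionCocycle_s17 Lg LE i s c) (hc' : IsSectionCocycle_s17 Lg LE i s c') : c = c' := by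
  obtain ⟨h₁, h₂, h₃⟩ := hc
  obtain ⟨h₁', h₂', h₃'⟩ := hc'
  refine Prod.ext (funext fun x => funext fun y => funext fun z => hi ?_)
    (Prod.ext (funext fun x => funext fun y => funext fun a => hi ?_)
      (funext fun x => funext fun a => funext fun b => hi ?_))
  · rw [h₁, h₁']
  · rw [h₂, h₂']
  · rw [h₃, h₃']

theorem isHAdditive (hi : Function.Injective i) (hc : IsSectionCocycle_s17 Lg LE i s c) :
    c.IsHAdditive := by
  obtain ⟨-, h₂, h₃⟩ := hc
  exact ⟨fun x y a b => hi (by simp [h₂]), fun x a b e => hi (by simp [h₃]),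
    fun x a b e => hi (by simp [h₃])⟩

theorem t_coprod (hc : IsSectionCocycle_s17 Lg LE i s c)
    (hi_hom : ∀ a b c, i (Lh.t a b c) = LE.t (i a) (i b) (i c)) (u v w : G × H) :
    LE.t (s.coprod i u) (s.coprod i v) (s.coprod i w) = s.coprod i (c.bracket Lg Lh u v w) := by
  obtain ⟨x, a⟩ := u
  obtain ⟨y, b⟩ := v
  obtain ⟨z, e⟩ := w
  obtain ⟨hω, hθ, hρ⟩ := hc
  simp only [bracket, nabBr, Dmap, Drho, LinearMap.coprod_apply, map_add, map_sub,
    LinearMap.add_apply, hω, hθ, hρ, hi_hom]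
  linear_combination (norm := abel1) LE.t_swap_s17 (s x) (i b) (s z) + LE.cyc (s x) (s y) (i e)
    - LE.t_swap_s17 (s y) (i e) (s x) + LE.cyc (i a) (i b) (s z) - LE.t_swap_s17 (i b) (s z) (i a)
    + LE.t_swap_s17 (i a) (s y) (i e)

theorem gauge (hc : IsSectionCocycle_s17 Lg LE i s c) (hi : Function.Injective i)
    (hi_hom : ∀ a b c, i (Lh.t a b c) = LE.t (i a) (i b) (i c)) (φ : G →ₗ[k] H) :
    IsSectionCocycle_s17 Lg LE i (s - i ∘ₗ φ) (c.gauge Lg Lh φ) := by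
  have hs' : ∀ x, (s - i ∘ₗ φ) x = s.coprod i (x, -φ x) := by simp [sub_eq_add_neg]
  have ht := hc.t_coprod hi_hom
  obtain ⟨hω, hθ, hρ⟩ := hc
  have hω₀ : ∀ y z, c.1 0 y z = 0 := fun y z => hi (by simp [hω])
  have hω₀₀ : ∀ x, c.1 x 0 0 = 0 := fun x => hi (by simp [hω])
  have hθ₀ : ∀ y a, c.2.1 0 y a = 0 := fun y a => hi (by simp [hθ])
  have hθ₀' : ∀ x a, c.2.1 x 0 a = 0 := fun x a => hi (by simp [hθ])
  have hρ₀ : ∀ a b, c.2.2 0 a b = 0 := fun a b => hi (by simp [hρ])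
  have hθn : ∀ x y a, c.2.1 x y (-a) = -c.2.1 x y a := fun x y a => hi (by simp [hθ])
  have hρn : ∀ x a b, c.2.2 x (-a) b = -c.2.2 x a b := fun x a b => hi (by simp [hρ])
  have hρn' : ∀ x a b, c.2.2 x a (-b) = -c.2.2 x a b := fun x a b => hi (by simp [hρ])
  refine ⟨fun x y z => ?_, fun x y a => ?_, fun x a b => ?_⟩
  · rw [hs', hs', hs', ht, hs']
    simp only [bracket, nabBr, LinearMap.coprod_apply, NabCochain.gauge, Dmap, Drho, map_add,
      map_sub, map_neg, hθn, hρn, hρn', LinearMap.neg_apply]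
    abel
  · rw [hs', hs', show i a = s.coprod i (0, a) by simp, ht]
    simp only [bracket, nabBr, LinearMap.coprod_apply, NabCochain.gauge, Dmap, Drho, map_add,
      map_sub, map_neg, map_zero, hθn, hρn, hρn', hω₀, hθ₀, hθ₀', hρ₀, LinearMap.neg_apply,
      LinearMap.zero_apply]
    abel
  · rw [hs', show i a = s.coprod i (0, a) by simp, show i b = s.coprod i (0, b) by simp, ht]
    simp only [bracket, nabBr, LinearMap.coprod_apply, NabCochain.gauge, Dmap, Drho, map_add,
      map_sub, map_neg, map_zero, hθn, hρn, hρn', hω₀₀, hθ₀, hθ₀', hρ₀, LinearMap.neg_apply,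
      Lh.t_swap_s17 (φ x)]
    abel

theorem twist (hc : IsSectionCocycle_s17 Lg LE i s c) {α : G ≃ₗ[k] G}
    {β : H ≃ₗ[k] H} (hα : ∀ x y z, α (Lg.t x y z) = Lg.t (α x) (α y) (α z)) {γ : E ≃ₗ[k] E}
    (hγ : ∀ x y z, γ (LE.t x y z) = LE.t (γ x) (γ y) (γ z)) (hγi : ∀ a, γ (i a) = i (β a)) :
    IsSectionCocycle_s17 Lg LE i (γ.toLinearMap ∘ₗ s ∘ₗ α.symm.toLinearMap) (c.twist α β) := by
  have hα' : ∀ x y z, α.symm (Lg.t x y z) = Lg.t (α.symm x) (α.symm y) (α.symm z) :=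
    fun x y z => α.injective (by simp [hα])
  have hγi' : ∀ a, γ (i (β.symm a)) = i a := by simp [hγi]
  obtain ⟨hω, hθ, hρ⟩ := hc
  refine ⟨fun x y z => ?_, fun x y a => ?_, fun x a b => ?_⟩ <;>
    simp only [NabCochain.twist, ← hγi, hω, hθ, hρ, map_sub, hγ, hγi', hα', LinearMap.coe_comp,
      LinearEquiv.coe_coe, Function.comp_apply]

end IsSectionCocycle_s17

theorem exists_eq_sub_comp_of_sections (hi : Function.Injective i)
    (hexact : Function.Exact i p) {s s' : G →ₗ[k] E} (hs : ∀ x, p (s x) = x)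
    (hs' : ∀ x, p (s' x) = x) : ∃ φ : G →ₗ[k] H, s' = s - i ∘ₗ φ := by
  have h : ∀ x, (s - s') x ∈ LinearMap.range i := fun x => (hexact _).1 (by simp [hs, hs'])
  refine ⟨(LinearEquiv.ofInjective i hi).symm.toLinearMap ∘ₗ (s - s').codRestrict _ h, ?_⟩
  ext x
  simp

theorem bijective_coprod_of_section (hi : Function.Injective i)
    (hexact : Function.Exact i p) (hs : ∀ x, p (s x) = x) :
    Function.Bijective (s.coprod i) := by
  refine ⟨(injective_iff_map_eq_zero _).2 fun ⟨x, a⟩ h => ?_, fun e => ?_⟩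
  · have hx : x = 0 := by simpa [hs, hexact.apply_apply_eq_zero] using congrArg p h
    subst hx
    simp only [LinearMap.coprod_apply, map_zero, zero_add] at h
    simp [hi (h.trans i.map_zero.symm)]
  · obtain ⟨a, ha⟩ := (hexact (e - s (p e))).1 (by simp [hs])
    exact ⟨(p e, a), by simp [ha]⟩

theorem exists_lift_of_isSectionCocycle_twist (hi : Function.Injective i)
    (hexact : Function.Exact i p)
    (hi_hom : ∀ a b c, i (Lh.t a b c) = LE.t (i a) (i b) (i c)) {s' : G →ₗ[k] E}
    (hs : ∀ x, p (s x) = x) (hs' : ∀ x, p (s' x) = x) {α : G ≃ₗ[k] G} {β : H ≃ₗ[k] H}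
    (hα : ∀ x y z, α (Lg.t x y z) = Lg.t (α x) (α y) (α z))
    (hβ : ∀ a b c, β (Lh.t a b c) = Lh.t (β a) (β b) (β c))
    (hc : IsSectionCocycle_s17 Lg LE i s c) (hc' : IsSectionCocycle_s17 Lg LE i s' (c.twist α β)) :
    ∃ γ : E ≃ₗ[k] E, (∀ x y z, γ (LE.t x y z) = LE.t (γ x) (γ y) (γ z)) ∧
      (∀ a, γ (i a) = i (β a)) ∧ ∀ x, p (γ (s x)) = α x := by
  let e := LinearEquiv.ofBijective _ (bijective_coprod_of_section hi hexact hs)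
  let e' := LinearEquiv.ofBijective _ (bijective_coprod_of_section hi hexact hs')
  let γ := e.symm ≪≫ₗ α.prodCongr β ≪≫ₗ e'
  have hγ : ∀ u, γ (s.coprod i u) = s'.coprod i (Prod.map α β u) := fun u =>
    congrArg (e' ∘ α.prodCongr β) (e.symm_apply_apply u)
  refine ⟨γ, fun u v w => ?_, fun a => ?_, fun x => ?_⟩
  · obtain ⟨u, rfl⟩ := e.surjective u
    obtain ⟨v, rfl⟩ := e.surjective v
    obtain ⟨w, rfl⟩ := e.surjective w
    simp only [e, LinearEquiv.ofBijective_apply]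
    rw [hc.t_coprod hi_hom, hγ, hγ, hγ, hγ, hc'.t_coprod hi_hom, bracket_twist Lg Lh hα hβ]
  · simpa using hγ (0, a)
  · simpa [hs'] using congrArg p (hγ (x, 0))

end Extension

theorem statement17_general {k G H E : Type*} [Field k] [AddCommGroup G] [Module k G]
    [AddCommGroup H] [Module k H] [AddCommGroup E] [Module k E]
    (Lg : LTS k G) (Lh : LTS k H) (LE : LTS k E)
    (i : H →ₗ[k] E) (p : E →ₗ[k] G)
    (ihom : ∀ a b c, i (Lh.t a b c) = LE.t (i a) (i b) (i c))
    (iinj : Function.Injective i)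
    (hexact : LinearMap.range i = LinearMap.ker p)
    (s : G →ₗ[k] E) (hs : ∀ x, p (s x) = x)
    (ω : G → G → G → H) (θ : G → G → H → H) (ρ : G → H → H → H)
    (hω : ∀ x y z, i (ω x y z) = LE.t (s x) (s y) (s z) - s (Lg.t x y z))
    (hθ : ∀ x y a, i (θ x y a) = LE.t (i a) (s x) (s y))
    (hρ : ∀ x a b, i (ρ x a b) = LE.t (s x) (i a) (i b)) :
    ∀ (α : G ≃ₗ[k] G) (β : H ≃ₗ[k] H),
      (∀ x y z, α (Lg.t x y z) = Lg.t (α x) (α y) (α z)) →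
      (∀ a b c, β (Lh.t a b c) = Lh.t (β a) (β b) (β c)) →
      ((∃ γ : E ≃ₗ[k] E,
          (∀ x y z, γ (LE.t x y z) = LE.t (γ x) (γ y) (γ z)) ∧
          (∀ a, γ (i a) = i (β a)) ∧
          (∀ x, p (γ (s x)) = α x)) ↔
        Quot.mk (relH3 (k := k) Lg Lh)
            (fun x y z => β (ω (α.symm x) (α.symm y) (α.symm z)),
             fun x y a => β (θ (α.symm x) (α.symm y) (β.symm a)),
             fun x a b => β (ρ (α.symm x) (β.symm a) (β.symm b))) =
          Quot.mk (relH3 (k := k) Lg Lh) (ω, θ, ρ)) := by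
  intro α β hα hβ
  replace hexact : Function.Exact i p := LinearMap.exact_iff.2 hexact.symm
  have hc : IsSectionCocycle_s17 Lg LE i s (ω, θ, ρ) := ⟨hω, hθ, hρ⟩
  change _ ↔ Quot.mk _ (NabCochain.twist α β (ω, θ, ρ)) = _
  constructor
  · rintro ⟨γ, hγ, hγi, hγs⟩
    have hc' := hc.twist hα hγ hγi
    obtain ⟨φ, hφ⟩ := exists_eq_sub_comp_of_sections iinj hexact hs
      (s' := γ.toLinearMap ∘ₗ s ∘ₗ α.symm.toLinearMap) (by simp [hγs])
    rw [hφ] at hc'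
    exact Quot.sound <| (NabCochain.relH3_iff_exists_eq_gauge Lg Lh _ _).2
      ⟨φ, hc'.unique iinj (hc.gauge iinj ihom φ)⟩
  · intro h
    obtain ⟨φ, hφ⟩ := (NabCochain.relH3_iff_exists_eq_gauge Lg Lh _ _).1
      (NabCochain.relH3_of_quot_mk_eq Lg Lh (hc.isHAdditive iinj) h)
    exact exists_lift_of_isSectionCocycle_twist iinj hexact ihom hs (s' := s - i ∘ₗ φ)
      (by simp [hs, hexact.apply_apply_eq_zero]) hα hβ hc (hφ ▸ hc.gauge iinj ihom φ)

/-- the Wells exact sequence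
`1 → Aut_h^g(ĝ) → Aut_h(ĝ) → Aut(g) × Aut(h) → H³_nab(g,h)`.
Since `Aut_h^g(ĝ) = ker λ` by definition, the content is exactness at `Aut(g) × Aut(h)`:
a pair `(α,β)` lies in the image of `λ` if and only if the Wells map sends it to the
trivial class, i.e. the class of the transformed cocycle equals the class of `(ω,θ,ρ)`. -/
theorem statement17 {k G H E : Type*} [Field k] [AddCommGroup G] [Module k G]
    [AddCommGroup H] [Module k H] [AddCommGroup E] [Module k E]
    (Lg : LTS k G) (Lh : LTS k H) (LE : LTS k E)
    (i : H →ₗ[k] E) (p : E →ₗ[k] G)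
    (ihom : ∀ a b c, i (Lh.t a b c) = LE.t (i a) (i b) (i c))
    (phom : ∀ x y z, p (LE.t x y z) = Lg.t (p x) (p y) (p z))
    (iinj : Function.Injective i) (psurj : Function.Surjective p)
    (hexact : LinearMap.range i = LinearMap.ker p)
    (s : G →ₗ[k] E) (hs : ∀ x, p (s x) = x)
    (ω : G → G → G → H) (θ : G → G → H → H) (ρ : G → H → H → H)
    (hω : ∀ x y z, i (ω x y z) = LE.t (s x) (s y) (s z) - s (Lg.t x y z))
    (hθ : ∀ x y a, i (θ x y a) = LE.t (i a) (s x) (s y))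
    (hρ : ∀ x a b, i (ρ x a b) = LE.t (s x) (i a) (i b)) :
    ∀ (α : G ≃ₗ[k] G) (β : H ≃ₗ[k] H),
      (∀ x y z, α (Lg.t x y z) = Lg.t (α x) (α y) (α z)) →
      (∀ a b c, β (Lh.t a b c) = Lh.t (β a) (β b) (β c)) →
      ((∃ γ : E ≃ₗ[k] E,
          (∀ x y z, γ (LE.t x y z) = LE.t (γ x) (γ y) (γ z)) ∧
          (∀ a, γ (i a) = i (β a)) ∧
          (∀ x, p (γ (s x)) = α x)) ↔
        Quot.mk (relH3 (k := k) Lg Lh)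
            (fun x y z => β (ω (α.symm x) (α.symm y) (α.symm z)),
             fun x y a => β (θ (α.symm x) (α.symm y) (β.symm a)),
             fun x a b => β (ρ (α.symm x) (β.symm a) (β.symm b))) =
          Quot.mk (relH3 (k := k) Lg Lh) (ω, θ, ρ)) :=
  statement17_general Lg Lh LE i p ihom iinj hexact s hs ω θ ρ hω hθ hρ
end
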